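/- Let p : E → B and p' : E' → B' be continuous maps with B and B' nonempty, and let f : B → C and f' : B' → C' be continuous maps such that the images f(B) ⊆ C and f'(B') ⊆ C' are normal spaces in their subspace topologies. Then for the product map p × p' : E × E' → B × B' and f × f' : B × B' → C × C' one has max{secat_f[p], secat_{f'}[p']} ≤ secat_{f×f'}[p × p' : E × E' → B × B'] ≤ secat_f[p] + secat_{f'}[p']. -/

import Mathlib

/-!
For the lower bound, a sectional cover of `p × p'` restricts to the slice `B × {b₀'}` (resp.
`{b₀} × B'`), which is a retract compatible with all the maps.

For the upper bound, let `U_0, …, U_a` and `V_0, …, V_b` be sectional covers for `p` and `p'`, and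
pick bump coverings `ρ_i` of `f(B)` and `τ_j` of `f'(B')` subordinate to them; this is where
normality enters. For nonempty `S`, `T`, the open set where the products `ρ_i τ_j` with
`(i, j) ∈ S × T` are positive and strictly exceed all other products lies in every `U_i × V_j`
with `(i, j) ∈ S × T`, and these sets cover. Two of them with `#S + #T = #S' + #T'` are disjoint,
since neither rectangle contains the other. Grouping by `#S + #T ∈ {2, …, a + b + 2}` gives
`a + b + 1` open sets, each a disjoint union of open sets over which `p × p'` has a section.
-/

/-- The relative sectional category `secat_f[p : E → B]` of `p : E → B` with respect to
`f : B → C`: the least `n` such that there are open sets `U_0, …, U_n ⊆ C` with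
`f(B) ⊆ U_0 ∪ ⋯ ∪ U_n` and `p` admitting a continuous section over each `f⁻¹(U_i)`. -/
noncomputable def secatf {E B C : Type*} [TopologicalSpace E] [TopologicalSpace B]
    [TopologicalSpace C] (p : C(E, B)) (f : C(B, C)) : ℕ∞ :=
  sInf {n : ℕ∞ | ∃ m : ℕ, n = m ∧ ∃ U : Fin (m + 1) → Set C,
    (∀ i, IsOpen (U i)) ∧ Set.range f ⊆ (⋃ i, U i) ∧
    ∀ i, ∃ s : C((⇑f ⁻¹' U i : Set B), E), ∀ x, p (s x) = (x : B)}

open Set Function Topology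
open scoped Finset

section Sections

variable {E B E' B' : Type*} [TopologicalSpace E] [TopologicalSpace B]
  [TopologicalSpace E'] [TopologicalSpace B']

def HasSectionOn (p : C(E, B)) (O : Set B) : Prop :=
  ∃ s : C(O, E), ∀ x, p (s x) = x

variable {p : C(E, B)}

theorem HasSectionOn.mono {O O' : Set B} (h : HasSectionOn p O) (hO : O' ⊆ O) :
    HasSectionOn p O' := by
  obtain ⟨s, hs⟩ := h
  exact ⟨s.comp ⟨inclusion hO, continuous_inclusion hO⟩, fun x => hs _⟩

theorem HasSectionOn.prodMap {p' : C(E', B')} {O : Set B} {O' : Set B'}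
    (h : HasSectionOn p O) (h' : HasSectionOn p' O') :
    HasSectionOn (p.prodMap p') (O ×ˢ O') := by
  obtain ⟨s, hs⟩ := h
  obtain ⟨s', hs'⟩ := h'
  refine ⟨⟨fun x => (s ⟨x.1.1, x.2.1⟩, s' ⟨x.1.2, x.2.2⟩), by fun_prop⟩, fun x => ?_⟩
  exact Prod.ext (hs _) (hs' _)

theorem HasSectionOn.preimage {q : C(E', B')} {O : Set B'} (hq : HasSectionOn q O)
    (g : C(B, B')) (h : C(E', E)) (k : B' → B) (hpq : ∀ e, p (h e) = k (q e))
    (hkg : ∀ b, k (g b) = b) : HasSectionOn p (g ⁻¹' O) := by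
  obtain ⟨s, hs⟩ := hq
  refine ⟨h.comp (s.comp ⟨fun x => ⟨g x, x.2⟩, by fun_prop⟩), fun x => ?_⟩
  simp [hpq, hs, hkg]

theorem HasSectionOn.iUnion {ι : Type*} {O : ι → Set B} (hO : ∀ i, IsOpen (O i))
    (hd : Pairwise (Disjoint on O)) (hs : ∀ i, HasSectionOn p (O i)) :
    HasSectionOn p (⋃ i, O i) := by
  choose s hs using hs
  let S : ι → Set (⋃ i, O i) := fun i => Subtype.val ⁻¹' O i
  let φ : ∀ i, C(S i, E) := fun i => (s i).comp ⟨fun x => ⟨x.1.1, x.2⟩, by fun_prop⟩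
  have hφ : ∀ i j (x : ⋃ i, O i) (hxi : x ∈ S i) (hxj : x ∈ S j),
      φ i ⟨x, hxi⟩ = φ j ⟨x, hxj⟩ := by
    intro i j x hxi hxj
    obtain rfl : i = j := hd.eq (not_disjoint_iff.mpr ⟨x, hxi, hxj⟩)
    rfl
  have hS : ∀ x : ⋃ i, O i, ∃ i, S i ∈ 𝓝 x := fun x =>
    (mem_iUnion.mp x.2).imp fun i hi => ((hO i).preimage continuous_subtype_val).mem_nhds hi
  refine ⟨ContinuousMap.liftCover S φ hφ hS, fun x => ?_⟩
  obtain ⟨i, hi⟩ := mem_iUnion.mp x.2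
  rw [ContinuousMap.liftCover_coe (i := i) ⟨x, hi⟩]
  exact hs i _

end Sections

section SectionalCover

variable {E B C E₂ B₂ C₂ : Type*} [TopologicalSpace E] [TopologicalSpace B] [TopologicalSpace C]
  [TopologicalSpace E₂] [TopologicalSpace B₂] [TopologicalSpace C₂]

def HasSectionalCover (p : C(E, B)) (f : C(B, C)) (m : ℕ) : Prop :=
  ∃ U : Fin (m + 1) → Set C, (∀ i, IsOpen (U i)) ∧ range f ⊆ ⋃ i, U i ∧
    ∀ i, HasSectionOn p (f ⁻¹' U i)

variable {p : C(E, B)} {f : C(B, C)} {q : C(E₂, B₂)} {f₂ : C(B₂, C₂)}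

theorem secatf_le_of_hasSectionalCover {m : ℕ} (h : HasSectionalCover p f m) :
    secatf p f ≤ m :=
  sInf_le ⟨m, rfl, h⟩

theorem exists_hasSectionalCover_of_secatf_ne_top (h : secatf p f ≠ ⊤) :
    ∃ m : ℕ, secatf p f = m ∧ HasSectionalCover p f m := by
  have hne : {n : ℕ∞ | ∃ m : ℕ, n = m ∧ HasSectionalCover p f m}.Nonempty :=
    nonempty_iff_ne_empty.mpr fun he => h (by rw [secatf]; exact he ▸ sInf_empty)
  exact csInf_mem hne

theorem secatf_le_secatf_of_forall
    (h : ∀ m, HasSectionalCover q f₂ m → HasSectionalCover p f m) :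
    secatf p f ≤ secatf q f₂ :=
  le_sInf fun _ ⟨m, hm, hcov⟩ => hm ▸ secatf_le_of_hasSectionalCover (h m hcov)

theorem secatf_le_add_of_forall {p' : C(E₂, B₂)} {f' : C(B₂, C₂)} {E₃ B₃ C₃ : Type*}
    [TopologicalSpace E₃] [TopologicalSpace B₃] [TopologicalSpace C₃]
    {q : C(E₃, B₃)} {g : C(B₃, C₃)}
    (h : ∀ a b, HasSectionalCover p f a → HasSectionalCover p' f' b →
      HasSectionalCover q g (a + b)) :
    secatf q g ≤ secatf p f + secatf p' f' := by
  by_cases hp : secatf p f = ⊤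
  · simp [hp]
  by_cases hp' : secatf p' f' = ⊤
  · simp [hp']
  obtain ⟨a, ha, hcov⟩ := exists_hasSectionalCover_of_secatf_ne_top hp
  obtain ⟨b, hb, hcov'⟩ := exists_hasSectionalCover_of_secatf_ne_top hp'
  rw [ha, hb]
  exact_mod_cast secatf_le_of_hasSectionalCover (h a b hcov hcov')

theorem HasSectionalCover.of_retract {m : ℕ} (hq : HasSectionalCover q f₂ m)
    (g : C(B, B₂)) (c : C(C, C₂)) (h : C(E₂, E)) (k : B₂ → B)
    (hfg : ∀ b, f₂ (g b) = c (f b)) (hpq : ∀ e, p (h e) = k (q e)) (hkg : ∀ b, k (g b) = b) :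
    HasSectionalCover p f m := by
  obtain ⟨U, hUo, hUc, hUs⟩ := hq
  refine ⟨fun i => c ⁻¹' U i, fun i => (hUo i).preimage c.continuous, ?_, fun i => ?_⟩
  · rintro _ ⟨b, rfl⟩
    simpa [← hfg] using hUc (mem_range_self (g b))
  · have hpre : f ⁻¹' (c ⁻¹' U i) = g ⁻¹' (f₂ ⁻¹' U i) := by
      ext b
      simp [hfg]
    rw [hpre]
    exact (hUs i).preimage g h k hpq hkg

theorem HasSectionalCover.of_isInducing {X : Type*} [TopologicalSpace X] {m : ℕ}
    {e : X → C} (he : IsInducing e) (g : B → X) (hfg : ∀ b, e (g b) = f b)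
    (W : Fin (m + 1) → Set X) (hWo : ∀ i, IsOpen (W i)) (hWc : range g ⊆ ⋃ i, W i)
    (hWs : ∀ i, HasSectionOn p (g ⁻¹' W i)) : HasSectionalCover p f m := by
  choose U hUo hUW using fun i => he.isOpen_iff.mp (hWo i)
  have hpre : ∀ i, f ⁻¹' U i = g ⁻¹' W i := fun i => by
    rw [← hUW]
    ext b
    simp [hfg]
  refine ⟨U, hUo, ?_, fun i => hpre i ▸ hWs i⟩
  rintro _ ⟨b, rfl⟩
  obtain ⟨i, hi⟩ := mem_iUnion.mp (hWc (mem_range_self b))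
  exact mem_iUnion.mpr ⟨i, show b ∈ f ⁻¹' U i from hpre i ▸ hi⟩

end SectionalCover

section GradedRefinement

open Finset in
theorem Finset.not_product_subset_product_of_card_add_eq {α β : Type*}
    {S S' : Finset α} {T T' : Finset β} (hS : S.Nonempty) (hT : T.Nonempty)
    (hcard : #S + #T = #S' + #T') (hne : (S, T) ≠ (S', T')) : ¬S ×ˢ T ⊆ S' ×ˢ T' := by
  intro h
  obtain ⟨i, hi⟩ := hS
  obtain ⟨j, hj⟩ := hT
  have hSS' : S ⊆ S' := fun x hx => (mem_product.mp (h (mk_mem_product hx hj))).1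
  have hTT' : T ⊆ T' := fun y hy => (mem_product.mp (h (mk_mem_product hi hy))).2
  have h₁ := card_le_card hSS'
  have h₂ := card_le_card hTT'
  have hS' : S = S' := eq_of_subset_of_card_le hSS' (by omega)
  have hT' : T = T' := eq_of_subset_of_card_le hTT' (by omega)
  exact hne (by rw [hS', hT'])

variable {α Z : Type*}

def dominanceRegion (φ : α → Z → ℝ) (P : Finset α) : Set Z :=
  {z | ∀ a ∈ P, 0 < φ a z ∧ ∀ b ∉ P, φ b z < φ a z}

theorem isOpen_dominanceRegion [TopologicalSpace Z] [Finite α] {φ : α → Z → ℝ}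
    (hφ : ∀ a, Continuous (φ a)) (P : Finset α) : IsOpen (dominanceRegion φ P) := by
  simp only [dominanceRegion, ofPred_forall, ofPred_and]
  exact isOpen_biInter_finset fun a _ => (isOpen_lt continuous_const (hφ a)).inter <|
    isOpen_iInter_of_finite fun b => isOpen_iInter_of_finite fun _ => isOpen_lt (hφ b) (hφ a)

theorem disjoint_dominanceRegion {φ : α → Z → ℝ} {P P' : Finset α} (h : ¬P ⊆ P')
    (h' : ¬P' ⊆ P) : Disjoint (dominanceRegion φ P) (dominanceRegion φ P') := by
  obtain ⟨a, haP, haP'⟩ := Finset.not_subset.mp h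
  obtain ⟨b, hbP', hbP⟩ := Finset.not_subset.mp h'
  refine Set.disjoint_left.mpr fun z hz hz' => ?_
  exact lt_asymm ((hz a haP).2 b hbP) ((hz' b hbP').2 a haP')

variable {ι κ X Y : Type*} [TopologicalSpace X] [TopologicalSpace Y]

def gradedPairs (ι κ : Type*) (n : ℕ) : Set (Finset ι × Finset κ) :=
  {q | q.1.Nonempty ∧ q.2.Nonempty ∧ #q.1 + #q.2 = n}

/-- At `z`, the indices where `ρ` resp. `τ` equals `1` span a dominating rectangle. -/
theorem BumpCovering.exists_mem_dominanceRegion_prod [Fintype ι] [Fintype κ]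
    (ρ : BumpCovering ι X univ) (τ : BumpCovering κ Y univ) (z : X × Y) :
    ∃ n, ∃ q ∈ gradedPairs ι κ n,
      z ∈ dominanceRegion (fun q z => ρ q.1 z.1 * τ q.2 z.2) (q.1 ×ˢ q.2) := by
  classical
  obtain ⟨i₀, hi₀⟩ := ρ.eventuallyEq_one' z.1 (mem_univ _)
  obtain ⟨j₀, hj₀⟩ := τ.eventuallyEq_one' z.2 (mem_univ _)
  let S := Finset.univ.filter fun i => ρ i z.1 = 1
  let T := Finset.univ.filter fun j => τ j z.2 = 1
  refine ⟨_, (S, T), ⟨⟨i₀, by simpa [S] using hi₀.eq_of_nhds⟩,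
    ⟨j₀, by simpa [T] using hj₀.eq_of_nhds⟩, rfl⟩, fun ij hij => ?_⟩
  obtain ⟨hi, hj⟩ := Finset.mem_product.mp hij
  simp only [S, T, Finset.mem_filter, Finset.mem_univ, true_and] at hi hj
  refine ⟨by simp [hi, hj], fun ij' hij' => ?_⟩
  simp only [hi, hj, mul_one]
  rcases not_and_or.mp (mt Finset.mem_product.mpr hij') with hi' | hj'
  · simp only [S, Finset.mem_filter, Finset.mem_univ, true_and] at hi'
    exact mul_lt_one_of_nonneg_of_lt_one_left (ρ.nonneg _ _)
      ((ρ.le_one _ _).lt_of_ne hi') (τ.le_one _ _)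
  · simp only [T, Finset.mem_filter, Finset.mem_univ, true_and] at hj'
    exact mul_lt_one_of_nonneg_of_lt_one_right (ρ.le_one _ _) (τ.nonneg _ _)
      ((τ.le_one _ _).lt_of_ne hj')

theorem exists_graded_refinement_prod [NormalSpace X] [NormalSpace Y] [Fintype ι] [Fintype κ]
    {U : ι → Set X} {V : κ → Set Y} (hUo : ∀ i, IsOpen (U i)) (hUc : ⋃ i, U i = univ)
    (hVo : ∀ j, IsOpen (V j)) (hVc : ⋃ j, V j = univ) :
    ∃ Q : Finset ι × Finset κ → Set (X × Y), (∀ q, IsOpen (Q q)) ∧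
      (∀ z, ∃ n, ∃ q ∈ gradedPairs ι κ n, z ∈ Q q) ∧
      (∀ q, ∀ i ∈ q.1, ∀ j ∈ q.2, Q q ⊆ U i ×ˢ V j) ∧
      ∀ n, (gradedPairs ι κ n).PairwiseDisjoint Q := by
  obtain ⟨ρ, hρU⟩ := BumpCovering.exists_isSubordinate_of_locallyFinite isClosed_univ U hUo
    (locallyFinite_of_finite U) hUc.ge
  obtain ⟨τ, hτV⟩ := BumpCovering.exists_isSubordinate_of_locallyFinite isClosed_univ V hVo
    (locallyFinite_of_finite V) hVc.ge
  let φ : ι × κ → X × Y → ℝ := fun q z => ρ q.1 z.1 * τ q.2 z.2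
  refine ⟨fun q => dominanceRegion φ (q.1 ×ˢ q.2),
    fun q => isOpen_dominanceRegion (fun _ => by fun_prop) _,
    ρ.exists_mem_dominanceRegion_prod τ, fun q i hi j hj z hz => ?_,
    fun n q hq q' hq' hne => ?_⟩
  · have hpos := (hz (i, j) (Finset.mem_product.mpr ⟨hi, hj⟩)).1
    have hρ : 0 < ρ i z.1 := pos_of_mul_pos_left hpos (τ.nonneg j z.2)
    have hτ : 0 < τ j z.2 := pos_of_mul_pos_right hpos (ρ.nonneg i z.1)
    exact ⟨hρU i (subset_tsupport _ hρ.ne'), hτV j (subset_tsupport _ hτ.ne')⟩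
  · obtain ⟨hS, hT, hcard⟩ := hq
    obtain ⟨hS', hT', hcard'⟩ := hq'
    exact disjoint_dominanceRegion
      (Finset.not_product_subset_product_of_card_add_eq hS hT (hcard.trans hcard'.symm) hne)
      (Finset.not_product_subset_product_of_card_add_eq hS' hT' (hcard'.trans hcard.symm)
        hne.symm)

end GradedRefinement

section Product

variable {E E' B B' C C' : Type*} [TopologicalSpace E] [TopologicalSpace E']
  [TopologicalSpace B] [TopologicalSpace B'] [TopologicalSpace C] [TopologicalSpace C']
  {p : C(E, B)} {p' : C(E', B')} {f : C(B, C)} {f' : C(B', C')}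

theorem HasSectionalCover.prodMap [NormalSpace (range f)] [NormalSpace (range f')] {a b : ℕ}
    (h : HasSectionalCover p f a) (h' : HasSectionalCover p' f' b) :
    HasSectionalCover (p.prodMap p') (f.prodMap f') (a + b) := by
  obtain ⟨U, hUo, hUc, hUs⟩ := h
  obtain ⟨V, hVo, hVc, hVs⟩ := h'
  obtain ⟨Q, hQo, hQc, hQUV, hQd⟩ := exists_graded_refinement_prod
    (fun i => (hUo i).preimage continuous_subtype_val)
    (iUnion_eq_univ_iff.mpr fun x => by simpa using hUc x.2)
    (fun j => (hVo j).preimage continuous_subtype_val)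
    (iUnion_eq_univ_iff.mpr fun y => by simpa using hVc y.2)
  let g : B × B' → range f × range f' := Prod.map (rangeFactorization f) (rangeFactorization f')
  have hg : Continuous g := by fun_prop
  refine .of_isInducing (IsInducing.subtypeVal.prodMap IsInducing.subtypeVal) g (fun _ => rfl)
    (fun r => ⋃ q ∈ gradedPairs _ _ (r + 2), Q q) (fun r => isOpen_biUnion fun q _ => hQo q)
    ?_ fun r => ?_
  · rintro _ ⟨z, rfl⟩
    obtain ⟨_, q, ⟨hS, hT, rfl⟩, hz⟩ := hQc (g z)
    have hS₁ := q.1.card_le_univ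
    have hT₁ := q.2.card_le_univ
    simp only [Fintype.card_fin] at hS₁ hT₁
    have := hS.card_pos
    have := hT.card_pos
    exact mem_iUnion.mpr
      ⟨⟨#q.1 + #q.2 - 2, by omega⟩, mem_biUnion ⟨hS, hT, by simp; omega⟩ hz⟩
  · rw [preimage_iUnion₂, biUnion_eq_iUnion]
    refine HasSectionOn.iUnion (fun q => (hQo q).preimage hg)
      (((hQd _).subtype _ _).mono fun _ _ hd => hd.preimage g)
      fun ⟨q, ⟨i, hi⟩, ⟨j, hj⟩, _⟩ => ?_
    exact ((hUs i).prodMap (hVs j)).mono fun z hz => hQUV q i hi j hj hz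

end Product

/-- Product Inequality, I: For `p : E → B`, `p' : E' → B'`, `f : B → C`,
`f' : B' → C'` with `B`, `B'` nonempty and the images `f(B)`, `f'(B')` normal in their
subspace topologies,
`max{secat_f[p], secat_{f'}[p']} ≤ secat_{f×f'}[p × p'] ≤ secat_f[p] + secat_{f'}[p']`. -/
theorem secatf_prod {E E' B B' C C' : Type*} [TopologicalSpace E] [TopologicalSpace E']
    [TopologicalSpace B] [TopologicalSpace B'] [TopologicalSpace C] [TopologicalSpace C']
    [Nonempty B] [Nonempty B']
    (p : C(E, B)) (p' : C(E', B')) (f : C(B, C)) (f' : C(B', C'))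
    [NormalSpace (Set.range f : Set C)] [NormalSpace (Set.range f' : Set C')] :
    max (secatf p f) (secatf p' f') ≤ secatf (p.prodMap p') (f.prodMap f') ∧
    secatf (p.prodMap p') (f.prodMap f') ≤ secatf p f + secatf p' f' := by
  obtain ⟨b₀⟩ := ‹Nonempty B›
  obtain ⟨b₀'⟩ := ‹Nonempty B'›
  refine ⟨max_le ?_ ?_, secatf_le_add_of_forall fun _ _ => HasSectionalCover.prodMap⟩
  · exact secatf_le_secatf_of_forall fun _ h => h.of_retract
      ((ContinuousMap.id B).prodMk (.const B b₀'))
      ((ContinuousMap.id C).prodMk (.const C (f' b₀')))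
      .fst Prod.fst (fun _ => rfl) (fun _ => rfl) (fun _ => rfl)
  · exact secatf_le_secatf_of_forall fun _ h => h.of_retract
      ((ContinuousMap.const B' b₀).prodMk (.id B'))
      ((ContinuousMap.const C' (f b₀)).prodMk (.id C'))
      .snd Prod.snd (fun _ => rfl) (fun _ => rfl) (fun _ => rfl)
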